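/- Let (W, ω) be a finite-dimensional symplectic graded vector space of even degree N. Under the identification Φ_ω : Der(T̂W) ≅ ∏_{r≥1} W^{⊗r}[-N] (via D ↦ the tensor corresponding to D|_W using ω to identify W* ≅ W[-N]), the subspace of symplectic derivations Der_ω(T̂W) corresponds exactly to ∏_{r≥1} (W^{⊗r})^{ℤ/rℤ}[-N], the product of the spaces of cyclically invariant tensors. -/

import Mathlib

/- Concrete model of the completed tensor algebra on a graded vector space `W`
with homogeneous basis indexed by `ι` (degrees `d : ι → ℤ`): the degree-`r` part
of `T̂W` is the space of functions `(words of length r in ι) → ℚ`.  A symplectic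
derivation `D` is determined by `t : ι → (List ι → ℚ)`, `t a = D(x^a)`, and
`B i j = ω_{ij}` is the inverse matrix of the symplectic form, so that the
symplectic element is `ω = Σ_{i,j} B i j · x^i x^j`. -/

/-- The tensor `Φ_ω(D)` corresponding to the derivation `D = Σ_a (t a) ∂/∂x^a`:
`Φ_ω(D) = Σ_{a,j} ω_{aj} (t a) ⊗ x^j`, in coordinates on a word `w`. -/
noncomputable def PhiTensor {ι : Type} [Fintype ι] [Inhabited ι]
    (B : ι → ι → ℚ) (t : ι → List ι → ℚ) : List ι → ℚ :=
  fun w => ∑ a : ι, B a (w.getLastD default) * t a w.dropLast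

/-- The condition `D(ω) = 0` (with `ω = Σ_{i,j} B i j x^i x^j`), written out via
the graded Leibniz rule for a derivation of homological degree `dD`. -/
def SympCond {ι : Type} [Fintype ι] [Inhabited ι]
    (d : ι → ℤ) (dD : ℤ) (B : ι → ι → ℚ) (t : ι → List ι → ℚ) : Prop :=
  ∀ w : List ι, w ≠ [] →
    (∑ a : ι, B a (w.getLastD default) * t a w.dropLast)
      + (-1 : ℚ) ^ (dD * d (w.headD default))
          * (∑ b : ι, B (w.headD default) b * t b w.tail) = 0

/-- Cyclic invariance (with Koszul signs) of the tensor `Φ_ω(D)`. -/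
def CycCond {ι : Type} [Fintype ι] [Inhabited ι]
    (d : ι → ℤ) (B : ι → ι → ℚ) (t : ι → List ι → ℚ) : Prop :=
  ∀ w : List ι, w ≠ [] →
    PhiTensor B t (w.rotate 1)
      = (-1 : ℚ) ^ (d (w.headD default) * ((w.tail.map d).sum)) * PhiTensor B t w

/- The degree constraint on a derivation (`t b w ≠ 0` only if `w` has total degree `d b + dD`),
combined with the graded antisymmetry of `ω`, turns the Leibniz term of `D(ω)` coming from the first
letter `h` of a word `h :: tl` into a signed coefficient `Φ_ω(D)(tl ++ [h])` of the rotated word.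
The symplectic condition at `h :: tl` then reads `Φ_ω(D)(h :: tl) = s · Φ_ω(D)(tl ++ [h])` with
`s = (-1)^(d h · deg tl)`, which is cyclic invariance because `s² = 1`. -/

theorem add_neg_mul_eq_zero_iff_eq_mul {R : Type*} [CommRing R] {s a b : R} (hs : s * s = 1) :
    a + -s * b = 0 ↔ b = s * a := by
  constructor
  · intro h
    linear_combination (-s) * h - b * hs
  · intro h
    linear_combination (-s) * h - a * hs

theorem neg_one_zpow_mul_self {α : Type*} [DivisionRing α] (n : ℤ) :
    (-1 : α) ^ n * (-1 : α) ^ n = 1 := by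
  rw [← zpow_add₀ (by norm_num)]
  exact Even.neg_one_zpow ⟨n, rfl⟩

section

variable {ι : Type} [Fintype ι] [Inhabited ι] (d : ι → ℤ) (dD : ℤ) (B : ι → ι → ℚ)
  (t : ι → List ι → ℚ)

theorem phiTensor_cons (h : ι) (tl : List ι) :
    PhiTensor B t (h :: tl) = ∑ a : ι, B a ((h :: tl).getLastD default) * t a (h :: tl).dropLast :=
  rfl

theorem phiTensor_rotate_one_cons (h : ι) (tl : List ι) :
    PhiTensor B t ((h :: tl).rotate 1) = ∑ b : ι, B b h * t b tl := by
  simp [PhiTensor, List.rotate_cons_succ]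

variable {d dD B t}

theorem sum_mul_eq_neg_one_zpow_mul_phiTensor_rotate
    (hBanti : ∀ i j, B i j = -(-1 : ℚ) ^ (d i * d j) * B j i)
    (ht : ∀ a w, t a w ≠ 0 → (w.map d).sum = d a + dD) (h : ι) (tl : List ι) :
    ∑ b : ι, B h b * t b tl
      = -(-1 : ℚ) ^ (d h * ((tl.map d).sum - dD)) * PhiTensor B t ((h :: tl).rotate 1) := by
  rw [phiTensor_rotate_one_cons, Finset.mul_sum]
  refine Finset.sum_congr rfl fun b _ => ?_
  by_cases hb : t b tl = 0
  · simp [hb]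
  · rw [hBanti h b, ht b tl hb, add_sub_cancel_right]
    ring

theorem sympCond_cons_iff
    (hBanti : ∀ i j, B i j = -(-1 : ℚ) ^ (d i * d j) * B j i)
    (ht : ∀ a w, t a w ≠ 0 → (w.map d).sum = d a + dD) (h : ι) (tl : List ι) :
    (∑ a : ι, B a ((h :: tl).getLastD default) * t a (h :: tl).dropLast)
        + (-1 : ℚ) ^ (dD * d h) * (∑ b : ι, B h b * t b tl) = 0
      ↔ PhiTensor B t ((h :: tl).rotate 1)
        = (-1 : ℚ) ^ (d h * ((tl.map d).sum)) * PhiTensor B t (h :: tl) := by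
  have hsign : (-1 : ℚ) ^ (dD * d h) * -(-1 : ℚ) ^ (d h * ((tl.map d).sum - dD))
      = -(-1 : ℚ) ^ (d h * (tl.map d).sum) := by
    rw [mul_neg, ← zpow_add₀ (by norm_num)]
    ring_nf
  rw [sum_mul_eq_neg_one_zpow_mul_phiTensor_rotate hBanti ht, ← mul_assoc, hsign,
    ← phiTensor_cons]
  exact add_neg_mul_eq_zero_iff_eq_mul (neg_one_zpow_mul_self _)

end

theorem stmt_4_general {ι : Type} [Fintype ι] [Inhabited ι]
    (dD : ℤ) (d : ι → ℤ) (B : ι → ι → ℚ)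
    (hBanti : ∀ i j, B i j = -(-1 : ℚ) ^ (d i * d j) * B j i)
    (t : ι → List ι → ℚ)
    (ht : ∀ a w, t a w ≠ 0 → (w.map d).sum = d a + dD) :
    SympCond d dD B t ↔ CycCond d B t := by
  refine forall_congr' fun w => ?_
  cases w with
  | nil => simp
  | cons h tl => simpa using sympCond_cons_iff hBanti ht h tl

/-- for a finite-dimensional symplectic graded vector space of even
degree `N`, under the identification `Φ_ω`, a derivation is symplectic (it kills
the symplectic element `ω`) exactly when the corresponding tensor is cyclically
invariant (with Koszul signs). -/
theorem stmt_4 {ι : Type} [Fintype ι] [Inhabited ι]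
    (N dD : ℤ) (hN : Even N) (d : ι → ℤ) (B : ι → ι → ℚ)
    (hBanti : ∀ i j, B i j = -(-1 : ℚ) ^ (d i * d j) * B j i)
    (hBnd : ∀ i, ∃ j, B i j ≠ 0)
    (hBdeg : ∀ i j, B i j ≠ 0 → d i + d j = N)
    (t : ι → List ι → ℚ)
    (ht : ∀ a w, t a w ≠ 0 → (w.map d).sum = d a + dD) :
    SympCond d dD B t ↔ CycCond d B t :=
  stmt_4_general dD d B hBanti t ht
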